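/- The iterated integral (1/(8π)) ∫_{-∞}^{∞} (∫_{-∞}^{∞} u_1(x,t) dt) dx equals 1, where u_1(x,t) = 4(1 - x^2 + t^2)/(1 + x^2 + t^2)^2. -/

import Mathlib

/-!
For fixed `x`, with `a = √(1 + x²)`, the inner integrand `4 (1 - x² + t²) / (a² + t²)²` has an
elementary primitive in `t` (an `arctan` term plus a rational term), which gives
`∫ u₁(x, t) dt = 4π / a³`. The outer integrand `4π (1 + x²)^(-3/2)` has primitive
`4π sin (arctan x) = 4π x / √(1 + x²)`, so its integral is `8π`.
-/

open MeasureTheory Real Filter Topology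

lemma tendsto_div_add_sq_cocompact (c : ℝ) :
    Tendsto (fun t : ℝ => t / (c + t ^ 2)) (cocompact ℝ) (𝓝 0) := by
  -- `0⁻¹ = 0` makes this identity hold at `t = 0` as well.
  have hcomp : (fun t : ℝ => t / (c + t ^ 2)) = (fun s => s / (1 + c * s ^ 2)) ∘ Inv.inv := by
    funext t
    rcases eq_or_ne t 0 with rfl | ht
    · simp
    · simp only [Function.comp_apply]
      field_simp
      ring
  have hcont : ContinuousAt (fun s : ℝ => s / (1 + c * s ^ 2)) 0 :=
    continuousAt_id.div (by fun_prop) (by simp)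
  rw [hcomp, ← Metric.cobounded_eq_cocompact]
  simpa using hcont.tendsto.comp tendsto_inv₀_cobounded

lemma integrable_inv_sq_add_sq {a : ℝ} (ha : a ≠ 0) :
    Integrable fun t : ℝ => (a ^ 2 + t ^ 2)⁻¹ := by
  refine ((integrable_inv_one_add_sq.comp_div ha).const_mul (a ^ 2)⁻¹).congr
    (Eventually.of_forall fun t => ?_)
  simp only
  field_simp

lemma integrable_add_sq_div_sq_add_sq_sq {a : ℝ} (ha : a ≠ 0) (b : ℝ) :
    Integrable fun t : ℝ => (b + t ^ 2) / (a ^ 2 + t ^ 2) ^ 2 := by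
  refine ((integrable_inv_sq_add_sq ha).const_mul (|b| / a ^ 2 + 1)).mono'
    (Continuous.div (by fun_prop) (by fun_prop) fun t => by positivity).aestronglyMeasurable
    (Eventually.of_forall fun t => ?_)
  have ha2 : 0 < a ^ 2 := by positivity
  have hd : 0 < a ^ 2 + t ^ 2 := by positivity
  have hnum : |b + t ^ 2| ≤ (|b| / a ^ 2 + 1) * (a ^ 2 + t ^ 2) := by
    have : |b| ≤ |b| / a ^ 2 * (a ^ 2 + t ^ 2) := by
      rw [div_mul_eq_mul_div, le_div_iff₀ ha2]
      exact mul_le_mul_of_nonneg_left (by nlinarith) (abs_nonneg b)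
    calc |b + t ^ 2| ≤ |b| + t ^ 2 :=
          (abs_add_le b (t ^ 2)).trans_eq (by rw [abs_of_nonneg (sq_nonneg t)])
      _ ≤ _ := by nlinarith
  rw [Real.norm_eq_abs, abs_div, abs_of_pos (pow_pos hd 2), div_le_iff₀ (pow_pos hd 2)]
  calc |b + t ^ 2| ≤ (|b| / a ^ 2 + 1) * (a ^ 2 + t ^ 2) := hnum
    _ = _ := by field_simp

-- A primitive `α ∫ dt / (a² + t²) + β t / (a² + t²)` needs `α (a² + t²) + β (a² - t²) = b + t²`,
-- i.e. `α = (b + a²) / (2a²)` and `β = (b - a²) / (2a²)`.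
lemma hasDerivAt_primitive_add_sq_div_sq_add_sq_sq {a : ℝ} (ha : a ≠ 0) (b t : ℝ) :
    HasDerivAt (fun t => (b + a ^ 2) / (2 * a ^ 3) * arctan (t / a)
        + (b - a ^ 2) / (2 * a ^ 2) * (t / (a ^ 2 + t ^ 2)))
      ((b + t ^ 2) / (a ^ 2 + t ^ 2) ^ 2) t := by
  have hd : a ^ 2 + t ^ 2 ≠ 0 := by positivity
  have harctan := ((hasDerivAt_id' t).div_const a).arctan
  have hfrac := (hasDerivAt_id' t).div ((hasDerivAt_pow 2 t).const_add (a ^ 2)) hd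
  refine ((harctan.const_mul ((b + a ^ 2) / (2 * a ^ 3))).add
    (hfrac.const_mul ((b - a ^ 2) / (2 * a ^ 2)))).congr_deriv ?_
  field_simp
  ring

theorem integral_add_sq_div_sq_add_sq_sq {a : ℝ} (ha : 0 < a) (b : ℝ) :
    ∫ t : ℝ, (b + t ^ 2) / (a ^ 2 + t ^ 2) ^ 2 = π * (b + a ^ 2) / (2 * a ^ 3) := by
  have hfrac_top := (tendsto_div_add_sq_cocompact (a ^ 2)).mono_left atTop_le_cocompact
  have hfrac_bot := (tendsto_div_add_sq_cocompact (a ^ 2)).mono_left atBot_le_cocompact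
  have harctan_top : Tendsto (fun t => arctan (t / a)) atTop (𝓝 (π / 2)) :=
    tendsto_nhds_of_tendsto_nhdsWithin (tendsto_arctan_atTop.comp (tendsto_id.atTop_div_const ha))
  have harctan_bot : Tendsto (fun t => arctan (t / a)) atBot (𝓝 (-(π / 2))) :=
    tendsto_nhds_of_tendsto_nhdsWithin (tendsto_arctan_atBot.comp (tendsto_id.atBot_div_const ha))
  rw [integral_of_hasDerivAt_of_tendsto (hasDerivAt_primitive_add_sq_div_sq_add_sq_sq ha.ne' b)
    (integrable_add_sq_div_sq_add_sq_sq ha.ne' b)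
    ((harctan_bot.const_mul _).add (hfrac_bot.const_mul _))
    ((harctan_top.const_mul _).add (hfrac_top.const_mul _))]
  field_simp
  ring

lemma hasDerivAt_sin_arctan (x : ℝ) :
    HasDerivAt (fun x => sin (arctan x)) (√(1 + x ^ 2) ^ 3)⁻¹ x := by
  convert (hasDerivAt_arctan' x).sin using 1
  have hs : 0 < √(1 + x ^ 2) := by positivity
  rw [cos_arctan, pow_succ, sq_sqrt (by positivity)]
  field_simp

lemma integrable_inv_sqrt_one_add_sq_pow_three :
    Integrable fun x : ℝ => (√(1 + x ^ 2) ^ 3)⁻¹ := by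
  refine integrable_inv_one_add_sq.mono' (by fun_prop) (Eventually.of_forall fun x => ?_)
  have hs : 1 ≤ √(1 + x ^ 2) := one_le_sqrt.2 (le_add_of_nonneg_right (sq_nonneg x))
  rw [Real.norm_eq_abs, abs_of_pos (by positivity), pow_succ, sq_sqrt (by positivity)]
  gcongr
  exact le_mul_of_one_le_right (by positivity) hs

theorem integral_inv_sqrt_one_add_sq_pow_three :
    ∫ x : ℝ, (√(1 + x ^ 2) ^ 3)⁻¹ = 2 := by
  have htop : Tendsto (fun x => sin (arctan x)) atTop (𝓝 1) := by
    simpa [Function.comp_def] using (continuous_sin.tendsto _).comp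
      (tendsto_nhds_of_tendsto_nhdsWithin tendsto_arctan_atTop)
  have hbot : Tendsto (fun x => sin (arctan x)) atBot (𝓝 (-1)) := by
    simpa [Function.comp_def] using (continuous_sin.tendsto _).comp
      (tendsto_nhds_of_tendsto_nhdsWithin tendsto_arctan_atBot)
  rw [integral_of_hasDerivAt_of_tendsto hasDerivAt_sin_arctan
    integrable_inv_sqrt_one_add_sq_pow_three hbot htop]
  norm_num

noncomputable def u₁ (x t : ℝ) : ℝ := 4 * (1 - x ^ 2 + t ^ 2) / (1 + x ^ 2 + t ^ 2) ^ 2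

lemma integral_u₁_dt (x : ℝ) : ∫ t, u₁ x t = 4 * π * (√(1 + x ^ 2) ^ 3)⁻¹ := by
  have ha : 0 < √(1 + x ^ 2) := by positivity
  have ha2 : √(1 + x ^ 2) ^ 2 = 1 + x ^ 2 := sq_sqrt (by positivity)
  calc ∫ t, u₁ x t = ∫ t, 4 * ((1 - x ^ 2 + t ^ 2) / (√(1 + x ^ 2) ^ 2 + t ^ 2) ^ 2) := by
        simp only [u₁, ha2, mul_div_assoc]
    _ = 4 * (π * (1 - x ^ 2 + √(1 + x ^ 2) ^ 2) / (2 * √(1 + x ^ 2) ^ 3)) := by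
        rw [integral_const_mul, integral_add_sq_div_sq_add_sq_sq ha]
    _ = 4 * π * (√(1 + x ^ 2) ^ 3)⁻¹ := by
        rw [ha2]
        field_simp
        ring

theorem stmt7 :
    (1 / (8 * π)) * ∫ x : ℝ, (∫ t : ℝ, 4 * (1 - x^2 + t^2) / (1 + x^2 + t^2)^2) = 1 := by
  change (1 / (8 * π)) * ∫ x, ∫ t, u₁ x t = 1
  simp_rw [integral_u₁_dt, integral_const_mul, integral_inv_sqrt_one_add_sq_pow_three]
  field_simp
  ring
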